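/- arXiv:0704.3864 — 5 statements merged into one kernel-verified Lean document; each statement's English description precedes it below -/
import Mathlib

section
/- Let K be a field of characteristic zero and let L be a finite-dimensional Lie algebra over K such that the first Chevalley–Eilenberg cohomology group H^1(L,V) vanishes for every finite-dimensional L-module V. Then L is semisimple. -/
/-!
Vanishing of `H¹` with coefficients in `L ⧸ ⁅L, L⁆`, on which `L` acts trivially, forces
`L = ⁅L, L⁆`. With coefficients in modules of linear maps `N →ₗ M` it makes every surjection of
finite-dimensional modules split equivariantly: the coboundary of a linear section is a cocycle
with values in `N →ₗ ker π`, and subtracting a primitive of it gives an invariant section.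
Splitting `L → L ⧸ R`, with `R` the radical, yields an ideal `B` complementary to `R`; then
`L = ⁅L, L⁆ ≤ ⁅R, R⁆ ⊔ B`, so `R = ⁅R, R⁆` by modularity, and a solvable ideal equal to its
own derived algebra is zero.
-/

universe u v

open LieAlgebra LieModule

section Cohomology

variable {K : Type u} {L : Type v} [Field K] [LieRing L] [LieAlgebra K L]

variable (K L) in
def FirstCohomologyVanishes (V : Type*) [AddCommGroup V] [Module K V] [LieRingModule L V] :
    Prop :=
  ∀ f : L →ₗ[K] V, (∀ x y : L, f ⁅x, y⁆ = ⁅x, f y⁆ - ⁅y, f x⁆) → ∃ v : V, ∀ x : L, f x = ⁅x, v⁆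

theorem FirstCohomologyVanishes.of_lieModuleEquiv {V W : Type*} [AddCommGroup V] [Module K V]
    [LieRingModule L V] [LieModule K L V] [AddCommGroup W] [Module K W] [LieRingModule L W]
    [LieModule K L W] (e : V ≃ₗ⁅K,L⁆ W) (hW : FirstCohomologyVanishes K L W) :
    FirstCohomologyVanishes K L V := by
  have he (x : L) (v : V) : e ⁅x, v⁆ = ⁅x, e v⁆ := (e : V →ₗ⁅K,L⁆ W).map_lie x v
  intro f hf
  obtain ⟨w, hw⟩ := hW (e.toLinearEquiv.toLinearMap ∘ₗ f) fun x y => by simp [hf, he]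
  refine ⟨e.symm w, fun x => e.injective ?_⟩
  simpa [he] using hw x

attribute [local instance] LieRing.ofAssociativeRing in
theorem firstCohomologyVanishes_of_forall
    (h1 : ∀ (V : Type u) [AddCommGroup V] [Module K V] [LieRingModule L V] [LieModule K L V]
      [FiniteDimensional K V], FirstCohomologyVanishes K L V)
    (V : Type*) [AddCommGroup V] [Module K V] [LieRingModule L V] [LieModule K L V]
    [FiniteDimensional K V] : FirstCohomologyVanishes K L V := by
  let e := (Module.finBasis K V).equivFun
  let ρ : L →ₗ⁅K⁆ Module.End K (Fin (Module.finrank K V) → K) :=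
    (e.lieConj : Module.End K V →ₗ⁅K⁆ _).comp (toEnd K L V)
  let := LieRingModule.compLieHom (Fin (Module.finrank K V) → K) ρ
  have := LieModule.compLieHom (Fin (Module.finrank K V) → K) ρ
  refine .of_lieModuleEquiv { e with map_lie' := fun {x v} => ?_ } (h1 _)
  change e ⁅x, v⁆ = e ⁅x, e.symm (e v)⁆
  rw [e.symm_apply_apply]

theorem exists_sub_mem_maxTrivSubmodule {V : Type*} [AddCommGroup V] [Module K V]
    [LieRingModule L V] [LieModule K L V] {W : LieSubmodule K L V}
    (hW : FirstCohomologyVanishes K L W) {v : V} (hv : ∀ x : L, ⁅x, v⁆ ∈ W) :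
    ∃ w ∈ W, v - w ∈ maxTrivSubmodule K L V := by
  let f : L →ₗ[K] W :=
    LinearMap.codRestrict W.toSubmodule ((toEnd K L V : L →ₗ[K] Module.End K V).flip v) hv
  obtain ⟨w, hw⟩ := hW f fun x y => Subtype.ext (lie_lie x y v)
  refine ⟨w, w.2, (mem_maxTrivSubmodule K L V _).mpr fun x => ?_⟩
  rw [lie_sub, sub_eq_zero]
  exact congrArg Subtype.val (hw x)

theorem exists_lieModuleHom_rightInverse
    (h1 : ∀ (V : Type u) [AddCommGroup V] [Module K V] [LieRingModule L V] [LieModule K L V]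
      [FiniteDimensional K V], FirstCohomologyVanishes K L V)
    {M N : Type*} [AddCommGroup M] [Module K M] [LieRingModule L M] [LieModule K L M]
    [FiniteDimensional K M] [AddCommGroup N] [Module K N] [LieRingModule L N] [LieModule K L N]
    [FiniteDimensional K N] (π : M →ₗ⁅K,L⁆ N) (hπ : Function.Surjective π) :
    ∃ t : N →ₗ⁅K,L⁆ M, ∀ n, π (t n) = n := by
  let W : LieSubmodule K L (N →ₗ[K] M) :=
    { LinearMap.ker (LinearMap.compRight K (π : M →ₗ[K] N)) with
      lie_mem := fun {x φ} hφ => by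
        ext n
        have hφ (n : N) : π (φ n) = 0 := LinearMap.congr_fun hφ n
        simp [LieHom.lie_apply, hφ] }
  have hW (φ : N →ₗ[K] M) : φ ∈ W ↔ ∀ n, π (φ n) = 0 := LinearMap.ext_iff
  obtain ⟨s, hs⟩ := (π : M →ₗ[K] N).exists_rightInverse_of_surjective
    (LinearMap.range_eq_top.mpr hπ)
  have hs (n : N) : π (s n) = n := LinearMap.congr_fun hs n
  obtain ⟨w, hwW, hsw⟩ := exists_sub_mem_maxTrivSubmodule (firstCohomologyVanishes_of_forall h1 W)
    (v := s) fun x => (hW _).mpr fun n => by simp [LieHom.lie_apply, hs]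
  refine ⟨maxTrivLinearMapEquivLieModuleHom ⟨s - w, hsw⟩, fun n => ?_⟩
  simp [hs, (hW w).mp hwW n]

theorem lie_top_eq_top_of_firstCohomologyVanishes
    (h : FirstCohomologyVanishes K L (L ⧸ ⁅(⊤ : LieIdeal K L), (⊤ : LieIdeal K L)⁆)) :
    ⁅(⊤ : LieIdeal K L), (⊤ : LieIdeal K L)⁆ = ⊤ := by
  set D := ⁅(⊤ : LieIdeal K L), (⊤ : LieIdeal K L)⁆
  have hD (x : L) (q : L ⧸ D) : ⁅x, q⁆ = 0 := by
    obtain ⟨y, rfl⟩ := LieSubmodule.Quotient.surjective_mk' D q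
    exact (LieSubmodule.Quotient.mk_eq_zero' (N := D)).mpr
      (LieSubmodule.lie_mem_lie (LieSubmodule.mem_top x) (LieSubmodule.mem_top y))
  obtain ⟨v, hv⟩ := h (LieSubmodule.Quotient.mk' D : L →ₗ[K] L ⧸ D) fun x y => by simp [hD]
  exact eq_top_iff.mpr fun x _ => (LieSubmodule.Quotient.mk_eq_zero' (N := D)).mp
    ((hv x).trans (hD x v))

end Cohomology

theorem LieModuleHom.isCompl_ker_range {R L M N : Type*} [CommRing R] [LieRing L]
    [AddCommGroup M] [Module R M] [LieRingModule L M] [AddCommGroup N] [Module R N]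
    [LieRingModule L N] (π : M →ₗ⁅R,L⁆ N) (t : N →ₗ⁅R,L⁆ M) (h : ∀ n, π (t n) = n) :
    IsCompl π.ker t.range := by
  rw [← LieSubmodule.isCompl_toSubmodule, LieModuleHom.ker_toSubmodule,
    LieModuleHom.toSubmodule_range]
  constructor
  · rw [Submodule.disjoint_def]
    rintro _ hm ⟨n, rfl⟩
    obtain rfl : n = 0 := by simpa [h] using hm
    exact map_zero t
  · rw [codisjoint_iff, eq_top_iff]
    intro m _
    exact Submodule.mem_sup.mpr ⟨m - t (π m), by simp [h], t (π m), ⟨π m, rfl⟩, sub_add_cancel _ _⟩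

section Complement

variable {R : Type*} {L : Type*} [CommRing R] [LieRing L] [LieAlgebra R L]

theorem LieIdeal.lie_self_eq_of_isCompl (hL : ⁅(⊤ : LieIdeal R L), (⊤ : LieIdeal R L)⁆ = ⊤)
    {I J : LieIdeal R L} (h : IsCompl I J) : ⁅I, I⁆ = I := by
  have hle : ⊤ ≤ ⁅I, I⁆ ⊔ J := calc
    ⊤ = ⁅I ⊔ J, I ⊔ J⁆ := by rw [h.sup_eq_top, hL]
    _ = ⁅I, I⁆ ⊔ ⁅I, J⁆ ⊔ (⁅J, I⁆ ⊔ ⁅J, J⁆) := by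
      rw [LieSubmodule.sup_lie, LieSubmodule.lie_sup, LieSubmodule.lie_sup]
    _ ≤ ⁅I, I⁆ ⊔ J :=
      sup_le (sup_le le_sup_left (LieSubmodule.lie_le_right J I |>.trans le_sup_right))
        (sup_le (LieSubmodule.lie_le_left J I |>.trans le_sup_right)
          (LieSubmodule.lie_le_right J J |>.trans le_sup_right))
  calc ⁅I, I⁆ = ⁅I, I⁆ ⊔ J ⊓ I := by rw [h.symm.inf_eq_bot, sup_bot_eq]
    _ = (⁅I, I⁆ ⊔ J) ⊓ I := (sup_inf_assoc_of_le J (LieSubmodule.lie_le_left I I)).symm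
    _ = I := by rw [top_le_iff.mp hle, top_inf_eq]

theorem LieIdeal.eq_bot_of_lie_self_eq {I : LieIdeal R L} [IsSolvable I] (h : ⁅I, I⁆ = I) :
    I = ⊥ := by
  have hI (k : ℕ) : derivedSeriesOfIdeal R L k I = I := by
    induction k with
    | zero => rfl
    | succ k ih => rw [derivedSeriesOfIdeal_succ, ih, h]
  obtain ⟨k, hk⟩ := IsSolvable.solvable R I
  rw [← hI k, ← LieIdeal.derivedSeries_eq_bot_iff, hk]

end Complement

theorem converse_first_whitehead_lemma_general
    (K : Type u) (L : Type v) [Field K]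
    [LieRing L] [LieAlgebra K L] [FiniteDimensional K L]
    (h1 : ∀ (V : Type u) [AddCommGroup V] [Module K V] [LieRingModule L V] [LieModule K L V]
      [FiniteDimensional K V] (f : L →ₗ[K] V),
        (∀ x y : L, f ⁅x, y⁆ = ⁅x, f y⁆ - ⁅y, f x⁆) → ∃ v : V, ∀ x : L, f x = ⁅x, v⁆) :
    LieAlgebra.radical K L = ⊥ := by
  have hL : ⁅(⊤ : LieIdeal K L), (⊤ : LieIdeal K L)⁆ = ⊤ :=
    lie_top_eq_top_of_firstCohomologyVanishes (firstCohomologyVanishes_of_forall h1 _)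
  obtain ⟨t, ht⟩ := exists_lieModuleHom_rightInverse h1
    (LieSubmodule.Quotient.mk' (radical K L)) (LieSubmodule.Quotient.surjective_mk' _)
  have hcompl := (LieSubmodule.Quotient.mk' (radical K L)).isCompl_ker_range t ht
  rw [LieSubmodule.Quotient.mk'_ker] at hcompl
  exact LieIdeal.eq_bot_of_lie_self_eq (LieIdeal.lie_self_eq_of_isCompl hL hcompl)

/-- **A converse to the First Whitehead Lemma.**
If `L` is a finite-dimensional Lie algebra over a field `K` of characteristic zero such that
the first Chevalley–Eilenberg cohomology `H¹(L,V)` vanishes (every 1-cocycle is a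
1-coboundary) for every finite-dimensional `L`-module `V`, then `L` is semisimple,
i.e. its solvable radical is zero. -/
theorem converse_first_whitehead_lemma
    (K : Type u) (L : Type v) [Field K] [CharZero K]
    [LieRing L] [LieAlgebra K L] [FiniteDimensional K L]
    (h1 : ∀ (V : Type u) [AddCommGroup V] [Module K V] [LieRingModule L V] [LieModule K L V]
      [FiniteDimensional K V] (f : L →ₗ[K] V),
        (∀ x y : L, f ⁅x, y⁆ = ⁅x, f y⁆ - ⁅y, f x⁆) → ∃ v : V, ∀ x : L, f x = ⁅x, v⁆) :
    LieAlgebra.radical K L = ⊥ :=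
  converse_first_whitehead_lemma_general K L h1
end

section
/- Let L be a finite-dimensional nilpotent Lie algebra over a field K of characteristic zero with dim L > 1. Then H^2(L,K) ≠ 0, where K is the trivial one-dimensional L-module. -/
/-!
Let `C = [L, L]`. Nilpotency forces `dim L/C ≥ 2`: if `L = K x + C` then `C ⊆ [L, C]`, so `C = 0`
by the lower central series. Pick `ξ` vanishing on `C` with `ξ x₁ = 1` and `x₂ ∈ ker ξ \ C`, and let
`B = span [ker ξ, ker ξ] ⊆ C`. As `ad x₁` is nilpotent, some `u = (ad x₁)ⁿ x₂ ∈ ker ξ` lies outside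
`B` while `[x₁, u] ∈ B`; take `τ` vanishing on `B` with `τ u = 1`. Since `a - ξ(a) x₁ ∈ ker ξ`,
modulo `B` one has `[a, c] ≡ ξ(a) [x₁, c] - ξ(c) [x₁, a]`; as `ξ` kills all brackets, this makes
`ξ ∧ τ` a cocycle. It is not a coboundary: a `g` with `(ξ ∧ τ)(x, y) = g [x, y]` vanishes on `B`
because `ξ ∧ τ` vanishes on `ker ξ × ker ξ`, yet `(ξ ∧ τ)(x₁, u) = 1` while `[x₁, u] ∈ B`.
-/

universe u v

open LinearMap (ker)

section Wedge

variable {R M : Type*} [CommRing R] [AddCommGroup M] [Module R M]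

def wedge (ξ τ : M →ₗ[R] R) : M →ₗ[R] M →ₗ[R] R := ξ.smulRight τ - τ.smulRight ξ

@[simp]
theorem wedge_apply (ξ τ : M →ₗ[R] R) (x y : M) : wedge ξ τ x y = ξ x * τ y - τ x * ξ y := by
  simp [wedge, smul_eq_mul]

theorem wedge_self_apply (ξ τ : M →ₗ[R] R) (x : M) : wedge ξ τ x x = 0 := by
  rw [wedge_apply, mul_comm, sub_self]

end Wedge

theorem Module.End.exists_pow_apply_notMem_and_apply_pow_apply_mem {R V : Type*} [Semiring R]
    [AddCommMonoid V] [Module R V] {D : Module.End R V} (hD : IsNilpotent D)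
    {p : Submodule R V} {v : V} (hv : v ∉ p) : ∃ n, (D ^ n) v ∉ p ∧ D ((D ^ n) v) ∈ p := by
  classical
  have hreach : ∃ n, (D ^ n) v ∈ p := by
    obtain ⟨N, hN⟩ := hD
    exact ⟨N, by simp [hN]⟩
  have hpos : Nat.find hreach ≠ 0 := fun h ↦ hv (by simpa [h] using Nat.find_spec hreach)
  refine ⟨Nat.find hreach - 1, Nat.find_min hreach (by omega), ?_⟩
  rw [← Module.End.mul_apply, ← pow_succ', Nat.sub_add_cancel (Nat.pos_of_ne_zero hpos)]
  exact Nat.find_spec hreach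

theorem Submodule.exists_dual_of_two_le_finrank_quotient {K V : Type*} [Field K] [AddCommGroup V]
    [Module K V] {p : Submodule K V} (h : 2 ≤ Module.finrank K (V ⧸ p)) :
    ∃ ξ : V →ₗ[K] K, p ≤ ker ξ ∧ ∃ x₁ x₂ : V, ξ x₁ = 1 ∧ ξ x₂ = 0 ∧ x₂ ∉ p := by
  have := Module.finite_of_finrank_pos (R := K) (M := V ⧸ p) (by omega)
  let b := Module.finBasis K (V ⧸ p)
  let i₀ : Fin (Module.finrank K (V ⧸ p)) := ⟨0, by omega⟩
  let i₁ : Fin (Module.finrank K (V ⧸ p)) := ⟨1, by omega⟩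
  obtain ⟨x₁, hx₁⟩ := p.mkQ_surjective (b i₀)
  obtain ⟨x₂, hx₂⟩ := p.mkQ_surjective (b i₁)
  refine ⟨(b.coord i₀).comp p.mkQ, fun c hc ↦ by simp [(Submodule.Quotient.mk_eq_zero p).mpr hc],
    x₁, x₂, by simp [hx₁], ?_, fun hx₂p ↦ b.ne_zero i₁ ?_⟩
  · simp [hx₂, Finsupp.single_eq_of_ne (show i₀ ≠ i₁ by simp [i₀, i₁, Fin.ext_iff])]
  · rwa [← hx₂, Submodule.mkQ_apply, Submodule.Quotient.mk_eq_zero]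

theorem LieSubmodule.eq_bot_of_le_lie_top {R L M : Type*} [CommRing R] [LieRing L]
    [LieAlgebra R L] [AddCommGroup M] [Module R M] [LieRingModule L M] [LieModule R L M]
    [LieModule.IsNilpotent L M] {N : LieSubmodule R L M} (h : N ≤ ⁅(⊤ : LieIdeal R L), N⁆) :
    N = ⊥ := by
  have hle : ∀ k, N ≤ LieModule.lowerCentralSeries R L M k := by
    intro k
    induction k with
    | zero => exact le_top
    | succ k ih =>
      rw [LieModule.lowerCentralSeries_succ]
      exact h.trans (LieSubmodule.mono_lie_right _ ih)
  obtain ⟨k, hk⟩ := LieModule.IsNilpotent.nilpotent R L M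
  exact le_bot_iff.mp (hk ▸ hle k)

theorem LieIdeal.lie_top_top_le_lie_top_of_forall_sub_smul_mem {R L : Type*} [CommRing R]
    [LieRing L] [LieAlgebra R L] (I : LieIdeal R L) (x : L) (h : ∀ a : L, ∃ s : R, a - s • x ∈ I) :
    ⁅(⊤ : LieIdeal R L), (⊤ : LieIdeal R L)⁆ ≤ ⁅(⊤ : LieIdeal R L), I⁆ := by
  rw [LieSubmodule.lieIdeal_oper_eq_span, LieSubmodule.lieSpan_le]
  rintro _ ⟨⟨a, -⟩, ⟨b, -⟩, rfl⟩
  obtain ⟨s, hs⟩ := h a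
  obtain ⟨t, ht⟩ := h b
  have hab : ⁅a, b⁆ = ⁅a, b - t • x⁆ - t • ⁅x, a - s • x⁆ := by
    simp only [lie_sub, lie_smul, lie_self, smul_zero, sub_zero]
    rw [← lie_skew a x, smul_neg]
    abel
  rw [hab]
  exact sub_mem (LieSubmodule.lie_mem_lie (LieSubmodule.mem_top a) ht)
    (Submodule.smul_mem _ t (LieSubmodule.lie_mem_lie (LieSubmodule.mem_top x) hs))

theorem LieAlgebra.two_le_finrank_quotient_lie_top_top {K L : Type*} [Field K] [LieRing L]
    [LieAlgebra K L] [LieRing.IsNilpotent L] (hdim : 1 < Module.finrank K L) :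
    2 ≤ Module.finrank K
      (L ⧸ (⁅(⊤ : LieIdeal K L), (⊤ : LieIdeal K L)⁆ : LieIdeal K L).toSubmodule) := by
  set C : LieIdeal K L := ⁅(⊤ : LieIdeal K L), (⊤ : LieIdeal K L)⁆
  have := Module.finite_of_finrank_pos (R := K) (M := L) (by omega)
  by_contra! hlt
  obtain ⟨v, hv⟩ := finrank_le_one_iff.mp (Nat.le_of_lt_succ hlt)
  obtain ⟨x, rfl⟩ := C.toSubmodule.mkQ_surjective v
  have hC : C ≤ ⁅⊤, C⁆ := C.lie_top_top_le_lie_top_of_forall_sub_smul_mem x fun a ↦ by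
    obtain ⟨s, hs⟩ := hv (C.toSubmodule.mkQ a)
    refine ⟨s, (LieSubmodule.mem_toSubmodule C).mp ((Submodule.Quotient.eq _).mp ?_)⟩
    rw [Submodule.Quotient.mk_smul]
    exact hs.symm
  have hCbot : C.toSubmodule = ⊥ := by
    rw [LieSubmodule.eq_bot_of_le_lie_top hC, LieSubmodule.bot_toSubmodule]
  rw [(Submodule.quotEquivOfEqBot _ hCbot).finrank_eq] at hlt
  omega

namespace LieAlgebra

variable {R L : Type*} [CommRing R] [LieRing L] [LieAlgebra R L]

def IsTwoCocycle (f : L →ₗ[R] L →ₗ[R] R) : Prop :=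
  ∀ x y z : L, f ⁅x, y⁆ z - f ⁅x, z⁆ y + f ⁅y, z⁆ x = 0

def IsTwoCoboundary (f : L →ₗ[R] L →ₗ[R] R) : Prop :=
  ∃ g : L →ₗ[R] R, ∀ x y : L, f x y = g ⁅x, y⁆

variable (R) in
def bracketSpan (S : Set L) : Submodule R L :=
  Submodule.span R (Set.image2 (fun p q ↦ ⁅p, q⁆) S S)

theorem lie_mem_bracketSpan {S : Set L} {p q : L} (hp : p ∈ S) (hq : q ∈ S) :
    ⁅p, q⁆ ∈ bracketSpan R S :=
  Submodule.subset_span (Set.mem_image2_of_mem hp hq)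

theorem bracketSpan_le_iff {S : Set L} {N : Submodule R L} :
    bracketSpan R S ≤ N ↔ ∀ p ∈ S, ∀ q ∈ S, ⁅p, q⁆ ∈ N := by
  rw [bracketSpan, Submodule.span_le, Set.image2_subset_iff]
  rfl

theorem bracketSpan_le_lie_top_top (S : Set L) :
    bracketSpan R S ≤ (⁅(⊤ : LieIdeal R L), (⊤ : LieIdeal R L)⁆ : LieIdeal R L).toSubmodule :=
  bracketSpan_le_iff.mpr fun p _ q _ ↦
    LieSubmodule.lie_mem_lie (LieSubmodule.mem_top p) (LieSubmodule.mem_top q)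

variable {ξ τ : L →ₗ[R] R} {x₁ : L}

theorem apply_lie_eq_of_bracketSpan_ker_le (hx₁ : ξ x₁ = 1)
    (hτ : bracketSpan R (ker ξ : Set L) ≤ ker τ) (a c : L) :
    τ ⁅a, c⁆ = ξ a * τ ⁅x₁, c⁆ - ξ c * τ ⁅x₁, a⁆ := by
  have hker : ∀ b : L, b - ξ b • x₁ ∈ ker ξ := fun b ↦ by simp [hx₁]
  have h0 : τ ⁅a - ξ a • x₁, c - ξ c • x₁⁆ = 0 := hτ (lie_mem_bracketSpan (hker a) (hker c))
  have hexpand : ⁅a - ξ a • x₁, c - ξ c • x₁⁆ = ⁅a, c⁆ + ξ c • ⁅x₁, a⁆ - ξ a • ⁅x₁, c⁆ := by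
    rw [← lie_skew x₁ a]
    simp only [sub_lie, lie_sub, smul_lie, lie_smul, lie_self, smul_zero, sub_zero, smul_neg]
    abel
  rw [hexpand, map_sub, map_add, map_smul, map_smul, smul_eq_mul, smul_eq_mul] at h0
  linear_combination h0

theorem isTwoCocycle_wedge (hξ : ∀ a b : L, ξ ⁅a, b⁆ = 0) (hx₁ : ξ x₁ = 1)
    (hτ : bracketSpan R (ker ξ : Set L) ≤ ker τ) : IsTwoCocycle (wedge ξ τ) := by
  intro x y z
  have hτ' := apply_lie_eq_of_bracketSpan_ker_le hx₁ hτ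
  rw [wedge_apply, wedge_apply, wedge_apply, hξ, hξ, hξ, hτ' x y, hτ' x z, hτ' y z]
  ring

theorem not_isTwoCoboundary_wedge [Nontrivial R] {u : L} (hx₁ : ξ x₁ = 1) (hu : ξ u = 0)
    (hτu : τ u = 1) (hx₁u : ⁅x₁, u⁆ ∈ bracketSpan R (ker ξ : Set L)) :
    ¬ IsTwoCoboundary (wedge ξ τ) := by
  rintro ⟨g, hg⟩
  have hg_ker : bracketSpan R (ker ξ : Set L) ≤ ker g := bracketSpan_le_iff.mpr fun p hp q hq ↦ by
    rw [SetLike.mem_coe, LinearMap.mem_ker] at hp hq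
    rw [LinearMap.mem_ker, ← hg, wedge_apply, hp, hq, zero_mul, mul_zero, sub_zero]
  have h := hg x₁ u
  rw [wedge_apply, hx₁, hτu, hu, hg_ker hx₁u] at h
  simp at h

end LieAlgebra

theorem nilpotent_second_cohomology_ne_zero_general
    (K : Type u) (L : Type v) [Field K]
    [LieRing L] [LieAlgebra K L]
    [LieRing.IsNilpotent L] (hdim : 1 < Module.finrank K L) :
    ∃ f : L →ₗ[K] L →ₗ[K] K,
      (∀ a : L, f a a = 0) ∧
      (∀ x y z : L, f ⁅x, y⁆ z - f ⁅x, z⁆ y + f ⁅y, z⁆ x = 0) ∧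
      ¬ ∃ g : L →ₗ[K] K, ∀ x y : L, f x y = g ⁅x, y⁆ := by
  obtain ⟨ξ, hξC, x₁, x₂, hx₁, hx₂, hx₂C⟩ :=
    Submodule.exists_dual_of_two_le_finrank_quotient
      (LieAlgebra.two_le_finrank_quotient_lie_top_top hdim)
  have hξ : ∀ a b : L, ξ ⁅a, b⁆ = 0 := fun a b ↦
    hξC (LieSubmodule.lie_mem_lie (LieSubmodule.mem_top a) (LieSubmodule.mem_top b))
  set B := LieAlgebra.bracketSpan K (ker ξ : Set L)
  have hx₂B : x₂ ∉ B := fun h ↦ hx₂C (LieAlgebra.bracketSpan_le_lie_top_top _ h)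
  obtain ⟨n, huB, hx₁u⟩ := Module.End.exists_pow_apply_notMem_and_apply_pow_apply_mem
    (LieModule.isNilpotent_toEnd_of_isNilpotent K L L x₁) hx₂B
  have hu : (LieModule.toEnd K L L x₁ ^ n) x₂ ∈ ker ξ :=
    Module.End.pow_apply_mem_of_forall_mem n (fun a _ ↦ hξ x₁ a) x₂ hx₂
  obtain ⟨τ, hτB, hτu⟩ := LinearMap.exists_extend_of_notMem (0 : B →ₗ[K] K) huB 1
  have hBτ : B ≤ ker τ := fun w hw ↦ LinearMap.congr_fun hτB ⟨w, hw⟩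
  exact ⟨wedge ξ τ, wedge_self_apply ξ τ, LieAlgebra.isTwoCocycle_wedge hξ hx₁ hBτ,
    LieAlgebra.not_isTwoCoboundary_wedge hx₁ hu hτu hx₁u⟩

/-- **(Dixmier.)** If `L` is a finite-dimensional nilpotent Lie algebra of dimension `> 1`
over a field `K` of characteristic zero, then `H²(L,K) ≠ 0`: there is an alternating
bilinear 2-cocycle with trivial coefficients which is not a coboundary. -/
theorem nilpotent_second_cohomology_ne_zero
    (K : Type u) (L : Type v) [Field K] [CharZero K]
    [LieRing L] [LieAlgebra K L] [FiniteDimensional K L]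
    [LieRing.IsNilpotent L] (hdim : 1 < Module.finrank K L) :
    ∃ f : L →ₗ[K] L →ₗ[K] K,
      (∀ a : L, f a a = 0) ∧
      (∀ x y z : L, f ⁅x, y⁆ z - f ⁅x, z⁆ y + f ⁅y, z⁆ x = 0) ∧
      ¬ ∃ g : L →ₗ[K] K, ∀ x y : L, f x y = g ⁅x, y⁆ :=
  nilpotent_second_cohomology_ne_zero_general K L hdim
end

section
/- Let L be a 2-trivial Lie algebra over a field K of characteristic zero, and suppose L is the semidirect sum L = S ⋉ I of a subalgebra S and an ideal I. Then S is 2-trivial. -/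
universe u v

section TwoCohomology

variable (K : Type u) [Field K]
variable (L : Type v) [LieRing L] [LieAlgebra K L]

/-- `f` is an alternating bilinear 2-cocycle on `L` with values in the `L`-module `V`:
it satisfies `f a a = 0` and the Chevalley–Eilenberg 2-cocycle identity. -/
def IsLieTwoCocycle {V : Type*} [AddCommGroup V] [Module K V] [LieRingModule L V]
    (f : L →ₗ[K] L →ₗ[K] V) : Prop :=
  (∀ a : L, f a a = 0) ∧
    ∀ x y z : L,
      ⁅x, f y z⁆ - ⁅y, f x z⁆ + ⁅z, f x y⁆ - f ⁅x, y⁆ z + f ⁅x, z⁆ y - f ⁅y, z⁆ x = 0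

/-- `f` is a 2-coboundary: `f (x, y) = x · g y − y · g x − g ⁅x, y⁆` for some linear `g`. -/
def IsLieTwoCoboundary {V : Type*} [AddCommGroup V] [Module K V] [LieRingModule L V]
    (f : L →ₗ[K] L →ₗ[K] V) : Prop :=
  ∃ g : L →ₗ[K] V, ∀ x y : L, f x y = ⁅x, g y⁆ - ⁅y, g x⁆ - g ⁅x, y⁆

/-- A finite-dimensional Lie algebra `L` is 2-trivial if `H²(L,V) = 0`, i.e. every
alternating 2-cocycle is a 2-coboundary, for every finite-dimensional `L`-module `V`. -/
def IsTwoTrivial : Prop :=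
  ∀ (V : Type u) [AddCommGroup V] [Module K V] [LieRingModule L V] [LieModule K L V]
    [FiniteDimensional K V] (f : L →ₗ[K] L →ₗ[K] V),
      IsLieTwoCocycle K L f → IsLieTwoCoboundary K L f

end TwoCohomology

/-!
The projection `L → S` along the ideal `I` is a morphism of Lie algebras retracting the
inclusion `S → L`. Pulling an `S`-module and an `S`-cocycle back along the projection gives an
`L`-cocycle; by 2-triviality of `L` it is the coboundary of some `g`, and restricting `g` to `S`
exhibits the original cocycle as a coboundary. So 2-triviality passes to retracts.
-/

section Retraction

variable {K : Type u} [Field K] {L L' : Type*} [LieRing L] [LieAlgebra K L]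
  [LieRing L'] [LieAlgebra K L'] {V : Type*} [AddCommGroup V] [Module K V] [LieRingModule L' V]

theorem IsLieTwoCocycle.compl₁₂_lieHom (φ : L →ₗ⁅K⁆ L') {f : L' →ₗ[K] L' →ₗ[K] V}
    (hf : IsLieTwoCocycle K L' f) :
    letI := LieRingModule.compLieHom V φ
    IsLieTwoCocycle K L (f.compl₁₂ (φ : L →ₗ[K] L') φ) := by
  let _ := LieRingModule.compLieHom V φ
  refine ⟨fun a => hf.1 (φ a), fun x y z => ?_⟩
  simpa only [LinearMap.compl₁₂_apply, LieHom.coe_toLinearMap, LieHom.map_lie,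
    LieRingModule.compLieHom_apply] using hf.2 (φ x) (φ y) (φ z)

theorem IsLieTwoCoboundary.of_compl₁₂_retraction (φ : L →ₗ⁅K⁆ L') (σ : L' →ₗ⁅K⁆ L)
    (hφσ : ∀ x, φ (σ x) = x) {f : L' →ₗ[K] L' →ₗ[K] V}
    (hf : letI := LieRingModule.compLieHom V φ
      IsLieTwoCoboundary K L (f.compl₁₂ (φ : L →ₗ[K] L') φ)) :
    IsLieTwoCoboundary K L' f := by
  let _ := LieRingModule.compLieHom V φ
  obtain ⟨g, hg⟩ := hf
  refine ⟨g ∘ₗ (σ : L' →ₗ[K] L), fun x y => ?_⟩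
  simpa only [LinearMap.compl₁₂_apply, LieHom.coe_toLinearMap, LinearMap.comp_apply,
    LieRingModule.compLieHom_apply, LieHom.map_lie, hφσ] using hg (σ x) (σ y)

theorem IsTwoTrivial.of_retraction (φ : L →ₗ⁅K⁆ L') (σ : L' →ₗ⁅K⁆ L) (hφσ : ∀ x, φ (σ x) = x)
    (h : IsTwoTrivial K L) : IsTwoTrivial K L' := by
  intro V _ _ _ _ _ f hf
  let _ := LieRingModule.compLieHom V φ
  have := LieModule.compLieHom V φ (R := K)
  exact .of_compl₁₂_retraction φ σ hφσ (h V _ (hf.compl₁₂_lieHom φ))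

end Retraction

section SemidirectSum

variable {K L : Type*} [CommRing K] [LieRing L] [LieAlgebra K L]

theorem LieIdeal.lie_sub_lie_mem_of_sub_mem (I : LieIdeal K L) {x x' y y' : L} (hx : x - x' ∈ I)
    (hy : y - y' ∈ I) : ⁅x, y⁆ - ⁅x', y'⁆ ∈ I := by
  have hsplit : ⁅x, y⁆ - ⁅x', y'⁆ = ⁅x - x', y⁆ + ⁅x', y - y'⁆ := by
    simp only [sub_lie, lie_sub]; abel
  rw [hsplit]
  exact add_mem (lie_mem_left K L I _ _ hx) (lie_mem_right K L I _ _ hy)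

noncomputable def LieSubalgebra.projectionAlongIdeal (S : LieSubalgebra K L) (I : LieIdeal K L)
    (h : IsCompl S.toSubmodule I.toSubmodule) : L →ₗ⁅K⁆ S where
  toLinearMap := S.toSubmodule.projectionOnto I.toSubmodule h
  map_lie' {x y} := by
    set π := S.toSubmodule.projectionOnto I.toSubmodule h
    have hres (z : L) : z - π z ∈ I := by
      rw [← LieSubmodule.mem_toSubmodule, ← Submodule.projectionOnto_apply_eq_zero_iff h,
        map_sub, Submodule.projectionOnto_apply_left, sub_self]
    have hmem : ⁅(π x : L), (π y : L)⁆ ∈ S := S.lie_mem (π x).2 (π y).2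
    change π ⁅x, y⁆ = ⟨_, hmem⟩
    rw [← Submodule.projectionOnto_apply_of_mem_left h hmem, ← sub_eq_zero, ← map_sub,
      Submodule.projectionOnto_apply_eq_zero_iff h]
    exact I.lie_sub_lie_mem_of_sub_mem (hres x) (hres y)

theorem LieSubalgebra.projectionAlongIdeal_apply_coe (S : LieSubalgebra K L) (I : LieIdeal K L)
    (h : IsCompl S.toSubmodule I.toSubmodule) (s : S) : S.projectionAlongIdeal I h s = s :=
  Submodule.projectionOnto_apply_left h s

end SemidirectSum

theorem isTwoTrivial_of_semidirect_summand_general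
    (K : Type u) (L : Type v) [Field K]
    [LieRing L] [LieAlgebra K L]
    (S : LieSubalgebra K L) (I : LieIdeal K L)
    (hcompl : IsCompl S.toSubmodule I.toSubmodule)
    (h2 : IsTwoTrivial K L) :
    IsTwoTrivial K ↥S :=
  h2.of_retraction (S.projectionAlongIdeal I hcompl) S.incl
    (S.projectionAlongIdeal_apply_coe I hcompl)

/-- If a 2-trivial Lie algebra `L` over a field of characteristic zero is the semidirect sum
`L = S ⋉ I` of a subalgebra `S` and an ideal `I` (so `L = S ⊕ I` as vector spaces), then
`S` is 2-trivial. -/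
theorem isTwoTrivial_of_semidirect_summand
    (K : Type u) (L : Type v) [Field K] [CharZero K]
    [LieRing L] [LieAlgebra K L] [FiniteDimensional K L]
    (S : LieSubalgebra K L) (I : LieIdeal K L)
    (hcompl : IsCompl S.toSubmodule I.toSubmodule)
    (h2 : IsTwoTrivial K L) :
    IsTwoTrivial K ↥S :=
  isTwoTrivial_of_semidirect_summand_general K L S I hcompl h2
end

section
/- Let L be a 2-trivial Lie algebra over a field K of characteristic zero, and suppose L = A ⊕ B is a direct sum of two ideals A and B (with [A,B] = 0). Then A is 2-trivial. -/
universe u v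

/-!
A Lie algebra retract of a 2-trivial Lie algebra is 2-trivial: if `π : L → A` is a Lie algebra
morphism with a Lie algebra section `ι`, an `A`-module becomes an `L`-module through `π`, a
2-cocycle `f` on `A` pulls back to the cocycle `f ∘ (π × π)` on `L`, and if that is the coboundary
of `g` then `f` is the coboundary of `g ∘ ι`. A direct summand `A` of `L = A ⊕ B` is such a
retract: the projection `π` along the ideal `B` is a Lie algebra morphism, because
`⁅x, y⁆ - ⁅π x, π y⁆ = ⁅x - π x, y⁆ + ⁅π x, y - π y⁆` lies in `B`.
-/

universe w

namespace LieIdeal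

variable {R L : Type*} [CommRing R] [LieRing L] [LieAlgebra R L] {I J : LieIdeal R L}

noncomputable def projectionOnto (h : IsCompl I J) : L →ₗ⁅R⁆ I :=
  have hIJ := LieSubmodule.isCompl_toSubmodule.mpr h
  let p : L →ₗ[R] I := I.toSubmodule.projectionOnto J.toSubmodule hIJ
  { p with
    map_lie' := by
      intro x y
      have hJ : ⁅x, y⁆ - ⁅(p x : L), (p y : L)⁆ ∈ J := by
        have hsplit : ⁅x, y⁆ - ⁅(p x : L), (p y : L)⁆ =
            ⁅x - p x, y⁆ + ⁅(p x : L), y - p y⁆ := by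
          simp only [sub_lie, lie_sub]; abel
        rw [hsplit]
        exact J.add_mem (lie_mem_left R L J _ _ (Submodule.sub_projection_mem hIJ x))
          (lie_mem_right R L J _ _ (Submodule.sub_projection_mem hIJ y))
      change p ⁅x, y⁆ = ⁅p x, p y⁆
      rw [← sub_add_cancel ⁅x, y⁆ ⁅(p x : L), (p y : L)⁆, map_add,
        (Submodule.projectionOnto_apply_eq_zero_iff hIJ).mpr hJ, zero_add]
      exact Submodule.projectionOnto_apply_left hIJ ⁅p x, p y⁆ }

theorem projectionOnto_incl (h : IsCompl I J) :
    Function.LeftInverse (projectionOnto h) I.incl :=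
  Submodule.projectionOnto_apply_left _

end LieIdeal

section Retract

variable {K : Type u} [Field K] {L : Type v} [LieRing L] [LieAlgebra K L]
  {A : Type w} [LieRing A] [LieAlgebra K A]
  {V : Type*} [AddCommGroup V] [Module K V] [LieRingModule L V] [LieRingModule A V]

theorem IsLieTwoCocycle.compl₁₂ {f : A →ₗ[K] A →ₗ[K] V} (hf : IsLieTwoCocycle K A f)
    (π : L →ₗ⁅K⁆ A) (hV : ∀ (x : L) (v : V), ⁅x, v⁆ = ⁅π x, v⁆) :
    IsLieTwoCocycle K L (f.compl₁₂ (π : L →ₗ[K] A) π) := by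
  refine ⟨fun x => hf.1 (π x), fun x y z => ?_⟩
  simpa [hV, LieHom.map_lie] using hf.2 (π x) (π y) (π z)

theorem IsLieTwoCoboundary.of_compl₁₂ {f : A →ₗ[K] A →ₗ[K] V} (π : L →ₗ⁅K⁆ A)
    (ι : A →ₗ⁅K⁆ L) (hπι : Function.LeftInverse π ι) (hV : ∀ (x : L) (v : V), ⁅x, v⁆ = ⁅π x, v⁆)
    (h : IsLieTwoCoboundary K L (f.compl₁₂ (π : L →ₗ[K] A) π)) : IsLieTwoCoboundary K A f := by
  obtain ⟨g, hg⟩ := h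
  refine ⟨g ∘ₗ (ι : A →ₗ[K] L), fun a b => ?_⟩
  simpa [hπι a, hπι b, hV] using hg (ι a) (ι b)

theorem IsTwoTrivial.of_leftInverse (π : L →ₗ⁅K⁆ A) (ι : A →ₗ⁅K⁆ L)
    (hπι : Function.LeftInverse π ι) (h : IsTwoTrivial K L) : IsTwoTrivial K A := by
  intro V _ _ _ _ _ f hf
  let := LieRingModule.compLieHom V π
  have := LieModule.compLieHom V π
  exact (h V _ (hf.compl₁₂ π fun _ _ => rfl)).of_compl₁₂ π ι hπι fun _ _ => rfl

end Retract

theorem isTwoTrivial_of_direct_summand_general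
    (K : Type u) (L : Type v) [Field K]
    [LieRing L] [LieAlgebra K L]
    (A B : LieIdeal K L) (hcompl : IsCompl A B)
    (h2 : IsTwoTrivial K L) :
    IsTwoTrivial K ↥A :=
  h2.of_leftInverse (LieIdeal.projectionOnto hcompl) A.incl (LieIdeal.projectionOnto_incl hcompl)

/-- If a 2-trivial Lie algebra `L` over a field of characteristic zero is the direct sum
`L = A ⊕ B` of two ideals `A` and `B` (with `⁅A, B⁆ = 0`), then `A` is 2-trivial. -/
theorem isTwoTrivial_of_direct_summand
    (K : Type u) (L : Type v) [Field K] [CharZero K]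
    [LieRing L] [LieAlgebra K L] [FiniteDimensional K L]
    (A B : LieIdeal K L) (hcompl : IsCompl A B) (hAB : ⁅A, B⁆ = (⊥ : LieIdeal K L))
    (h2 : IsTwoTrivial K L) :
    IsTwoTrivial K ↥A :=
  isTwoTrivial_of_direct_summand_general K L A B hcompl h2
end

section
/- No 2-dimensional Lie algebra over a field K of characteristic zero is 2-trivial; that is, every 2-dimensional Lie algebra L over K admits a finite-dimensional L-module V with H^2(L,V) ≠ 0. -/
universe u v

/-!
In dimension two the bracket has the form `⁅x, y⁆ = χ x • y - χ y • x` for a linear form `χ`,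
which is then a character. On the one-dimensional module `K_χ` every 2-coboundary vanishes, since
it is `g` applied to `χ x • y - χ y • x - ⁅x, y⁆`. On the other hand every alternating form on a
plane is a 2-cocycle, there being no nonzero alternating 3-forms; the determinant is one. Hence
`H²(L, K_χ) ≠ 0`.
-/

namespace Module.Basis

section

variable {K M : Type*} [CommRing K] [AddCommGroup M] [Module K M]

noncomputable def detForm (B : Basis (Fin 2) K M) : M →ₗ[K] M →ₗ[K] K :=
  (B.coord 0).smulRight (B.coord 1) - (B.coord 1).smulRight (B.coord 0)

variable (B : Basis (Fin 2) K M)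

@[simp]
theorem detForm_apply (x y : M) :
    B.detForm x y = B.repr x 0 * B.repr y 1 - B.repr x 1 * B.repr y 0 := by
  simp [detForm]

theorem detForm_self (x : M) : B.detForm x x = 0 := by
  rw [detForm_apply, mul_comm, sub_self]

theorem detForm_zero_one : B.detForm (B 0) (B 1) = 1 := by
  simp

theorem detForm_smul_sub_smul_add_smul_eq_zero (x y z : M) :
    B.detForm y z • x - B.detForm x z • y + B.detForm x y • z = 0 := by
  refine B.ext_elem fun i => ?_
  fin_cases i <;> simp <;> ring

end

variable {K L : Type*} [CommRing K] [LieRing L] [LieAlgebra K L] (B : Basis (Fin 2) K L)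

theorem lie_eq_detForm_smul (x y : L) : ⁅x, y⁆ = B.detForm x y • ⁅B 0, B 1⁆ := by
  conv_lhs => rw [← B.sum_repr x, ← B.sum_repr y]
  simp only [Fin.sum_univ_two, lie_add, add_lie, lie_smul, smul_lie, lie_self, smul_zero,
    zero_add, add_zero, ← lie_skew (B 1) (B 0), detForm_apply]
  module

end Module.Basis

/-- Take `χ x = det (x, ⁅e, f⁆)` for a basis `e, f`. -/
theorem LieAlgebra.exists_lie_eq_smul_sub_smul_of_finrank_eq_two {K L : Type*} [Field K]
    [LieRing L] [LieAlgebra K L] (hL : Module.finrank K L = 2) :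
    ∃ χ : Module.Dual K L, ∀ x y : L, ⁅x, y⁆ = χ x • y - χ y • x := by
  have : Module.Finite K L := Module.finite_of_finrank_eq_succ hL
  let B := Module.finBasisOfFinrankEq K L hL
  refine ⟨B.detForm.flip ⁅B 0, B 1⁆, fun x y => ?_⟩
  rw [B.lie_eq_detForm_smul x y, LinearMap.flip_apply, LinearMap.flip_apply]
  linear_combination (norm := module) B.detForm_smul_sub_smul_add_smul_eq_zero x y ⁅B 0, B 1⁆

namespace LieAlgebra

variable {K L : Type*} [CommRing K] [LieRing L] [LieAlgebra K L]

attribute [local instance] LieRing.ofAssociativeRing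

def lieCharacterOfLieEq (χ : Module.Dual K L) (hχ : ∀ x y : L, ⁅x, y⁆ = χ x • y - χ y • x) :
    LieCharacter K L where
  __ := χ
  map_lie' {x y} := by
    simp only [AddHom.toFun_eq_coe, LinearMap.coe_toAddHom, hχ, map_sub, map_smul, smul_eq_mul,
      LieRing.of_associative_ring_bracket, mul_comm (χ x)]

def CharacterModule (_χ : LieCharacter K L) : Type _ := K

namespace CharacterModule

variable (χ : LieCharacter K L)

instance : AddCommGroup (CharacterModule χ) := inferInstanceAs (AddCommGroup K)

instance : Module K (CharacterModule χ) := inferInstanceAs (Module K K)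

instance [Nontrivial K] : Nontrivial (CharacterModule χ) := inferInstanceAs (Nontrivial K)

instance : Module.Finite K (CharacterModule χ) := inferInstanceAs (Module.Finite K K)

instance : LieRingModule L (CharacterModule χ) where
  bracket x v := χ x • v
  add_lie x y v := by simp only [map_add, add_smul]
  lie_add x v w := smul_add _ v w
  leibniz_lie x y v := by
    simp only [lieCharacter_apply_lie, zero_smul, zero_add, smul_comm (χ x)]

theorem lie_def (x : L) (v : CharacterModule χ) : ⁅x, v⁆ = χ x • v := rfl

instance : LieModule K L (CharacterModule χ) where
  smul_lie t x v := by simp only [lie_def, map_smul, smul_assoc]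
  lie_smul t x v := by simp only [lie_def, smul_comm t]

end CharacterModule

end LieAlgebra

section TwoCocycles

variable {K L V : Type*} [Field K] [LieRing L] [LieAlgebra K L]
  [AddCommGroup V] [Module K V] [LieRingModule L V] {χ : Module.Dual K L}

/-- The cocycle identity is `χ` of the vanishing vector
`det (y, z) • x - det (x, z) • y + det (x, y) • z` minus `det (⁅B 0, B 1⁆, -)` of it. -/
theorem Module.Basis.isLieTwoCocycle_detForm_smul (B : Basis (Fin 2) K L)
    (hV : ∀ (x : L) (v : V), ⁅x, v⁆ = χ x • v) (v : V) :
    IsLieTwoCocycle K L (B.detForm.compr₂ (LinearMap.toSpanSingleton K V v)) := by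
  refine ⟨fun x => by simp only [LinearMap.compr₂_apply, detForm_self, map_zero], fun x y z => ?_⟩
  set P := B.detForm y z • x - B.detForm x z • y + B.detForm x y • z
  have hP : P = 0 := B.detForm_smul_sub_smul_add_smul_eq_zero x y z
  calc _ = (χ P - B.detForm ⁅B 0, B 1⁆ P) • v := by
        simp only [P, LinearMap.compr₂_apply, LinearMap.toSpanSingleton_apply, hV,
          B.lie_eq_detForm_smul x y, B.lie_eq_detForm_smul x z, B.lie_eq_detForm_smul y z,
          map_add, map_sub, map_smul, LinearMap.smul_apply, smul_eq_mul]
        module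
    _ = 0 := by
        rw [hP, map_zero, map_zero, sub_zero, zero_smul]

/-- Every coboundary `(x, y) ↦ x • g y - y • g x - g ⁅x, y⁆` is `g` applied to
`χ x • y - χ y • x - ⁅x, y⁆ = 0`. -/
theorem IsLieTwoCoboundary.eq_zero (hχ : ∀ x y : L, ⁅x, y⁆ = χ x • y - χ y • x)
    (hV : ∀ (x : L) (v : V), ⁅x, v⁆ = χ x • v) {f : L →ₗ[K] L →ₗ[K] V}
    (hf : IsLieTwoCoboundary K L f) : f = 0 := by
  obtain ⟨g, hg⟩ := hf
  ext x y
  rw [hg, hV, hV, hχ, map_sub, map_smul, map_smul, sub_self, LinearMap.zero_apply,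
    LinearMap.zero_apply]

end TwoCocycles

theorem two_dimensional_not_isTwoTrivial_general
    (K : Type u) (L : Type v) [Field K]
    [LieRing L] [LieAlgebra K L]
    (hdim : Module.finrank K L = 2) :
    ¬ IsTwoTrivial K L := by
  intro h
  have : Module.Finite K L := Module.finite_of_finrank_eq_succ hdim
  let B := Module.finBasisOfFinrankEq K L hdim
  obtain ⟨χ, hχ⟩ := LieAlgebra.exists_lie_eq_smul_sub_smul_of_finrank_eq_two hdim
  let V := LieAlgebra.CharacterModule (LieAlgebra.lieCharacterOfLieEq χ hχ)
  have hV : ∀ (x : L) (v : V), ⁅x, v⁆ = χ x • v := fun _ _ => rfl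
  obtain ⟨v, hv⟩ := exists_ne (0 : V)
  have hcob := h V _ (B.isLieTwoCocycle_detForm_smul hV v)
  have hval := LinearMap.congr_fun₂ (hcob.eq_zero hχ hV) (B 0) (B 1)
  rw [LinearMap.compr₂_apply, B.detForm_zero_one, LinearMap.toSpanSingleton_apply, one_smul,
    LinearMap.zero_apply, LinearMap.zero_apply] at hval
  exact hv hval

/-- No 2-dimensional Lie algebra over a field of characteristic zero is 2-trivial; that is,
every 2-dimensional Lie algebra admits a finite-dimensional module `V` with `H²(L,V) ≠ 0`. -/
theorem two_dimensional_not_isTwoTrivial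
    (K : Type u) (L : Type v) [Field K] [CharZero K]
    [LieRing L] [LieAlgebra K L] [FiniteDimensional K L]
    (hdim : Module.finrank K L = 2) :
    ¬ IsTwoTrivial K L :=
  two_dimensional_not_isTwoTrivial_general K L hdim
end
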